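/- Let A be a 2n×2n real positive definite matrix and let (u,v) be a normalised symplectic eigenvector pair of A, i.e. Au = dJv, Av = −dJu and ⟨u, Jv⟩ = 1 for some d > 0. Then ‖u‖² + ‖v‖² ≤ 2κ(A), where κ(A) = ‖A‖·‖A⁻¹‖ is the condition number of A with respect to the operator norm. -/

import Mathlib

open Filter Matrix Topology
open scoped Classical

/-- The space of `2n × 2n` real matrices, indexed by `Fin n ⊕ Fin n`. -/
abbrev Mat (n : ℕ) := Matrix (Fin n ⊕ Fin n) (Fin n ⊕ Fin n) ℝ

/-- `2n × 2m` real matrices. -/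
abbrev MatR (n m : ℕ) := Matrix (Fin n ⊕ Fin n) (Fin m ⊕ Fin m) ℝ

/-- The standard symplectic form matrix `J = [[0, I], [-I, 0]]`. -/
def symplJ (n : ℕ) : Mat n := Matrix.fromBlocks 0 1 (-1) 0

/-- The increasingly sorted symplectic eigenvalues of `A` (0-based indexing), defined via
Williamson's theorem: `d : Fin n → ℝ` is the unique monotone positive tuple such that
`MᵀAM = diag d ⊕ diag d` for some symplectic `M` (which exists whenever `A` is positive
definite). -/
noncomputable def symplEig {n : ℕ} (A : Mat n) : Fin n → ℝ :=
  if h : ∃ d : Fin n → ℝ, Monotone d ∧ (∀ i, 0 < d i) ∧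
      ∃ M : Mat n, Mᵀ * symplJ n * M = symplJ n ∧
        Mᵀ * A * M = Matrix.fromBlocks (Matrix.diagonal d) 0 0 (Matrix.diagonal d)
  then h.choose else fun _ => 0

/-- `sEig A j` is the `j`-th symplectic eigenvalue `d_j(A)`, with 1-based index `j`. -/
noncomputable def sEig {n : ℕ} (A : Mat n) (j : ℕ) : ℝ :=
  if h : j - 1 < n then symplEig A ⟨j - 1, h⟩ else 0

/-- `i_m`: the number of indices `k ≤ m` (1-based) with `d_k(A) = d_m(A)`. -/
noncomputable def iIdx {n : ℕ} (A : Mat n) (m : ℕ) : ℕ :=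
  ((Finset.Icc 1 n).filter fun k => k ≤ m ∧ sEig A k = sEig A m).card

/-- `j_m`: the number of indices `k > m` (1-based) with `d_k(A) = d_m(A)`. -/
noncomputable def jIdx {n : ℕ} (A : Mat n) (m : ℕ) : ℕ :=
  ((Finset.Icc 1 n).filter fun k => m < k ∧ sEig A k = sEig A m).card

/-- Membership in `Sp(2n, 2m)`: the columns form a symplectically orthonormal set,
equivalently `Sᵀ J_{2n} S = J_{2m}`. -/
def InSp (n m : ℕ) (S : MatR n m) : Prop := Sᵀ * symplJ n * S = symplJ m

/-- Membership in `Sp(2n, 2m, A)`: additionally the `j`-th column pair `(u_j, v_j)` is a pair of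
symplectic eigenvectors of `A` for the symplectic eigenvalue `d_j(A)`. -/
def InSpA (n m : ℕ) (A : Mat n) (S : MatR n m) : Prop :=
  InSp n m S ∧ ∀ j : Fin m,
    A *ᵥ (fun i => S i (Sum.inl j)) = sEig A (j + 1) • (symplJ n *ᵥ fun i => S i (Sum.inr j)) ∧
    A *ᵥ (fun i => S i (Sum.inr j)) = (-sEig A (j + 1)) • (symplJ n *ᵥ fun i => S i (Sum.inl j))

/-- The inner product `⟨X, Y⟩ = tr (X Y)` on matrices. -/
noncomputable def minner {α : Type*} [Fintype α] (X Y : Matrix α α ℝ) : ℝ := (X * Y).trace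

/-- `σ_m : S(2n) → (-∞, ∞]`, equal to `-2 (d_1(P) + ⋯ + d_m(P))` on positive definite `P`
and `∞` elsewhere. -/
noncomputable def sigmaE {n : ℕ} (m : ℕ) (P : Mat n) : EReal :=
  if P.PosDef then (((-2) * ∑ j ∈ Finset.Icc 1 m, sEig P j : ℝ) : EReal) else ⊤

/-- The real-valued version of `σ_m`, i.e. `-2 (d_1(P) + ⋯ + d_m(P))`. -/
noncomputable def sigmaR {n : ℕ} (m : ℕ) (P : Mat n) : ℝ :=
  (-2) * ∑ j ∈ Finset.Icc 1 m, sEig P j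

/-- The Fenchel subdifferential of `σ_m` at `A`, within the space `S(2n)` of symmetric
matrices. -/
noncomputable def sigmaSub {n : ℕ} (m : ℕ) (A : Mat n) : Set (Mat n) :=
  {X | X.IsSymm ∧ ∀ H : Mat n, H.IsSymm →
    ((minner X (H - A) : ℝ) : EReal) ≤ sigmaE m H - sigmaE m A}

/-- `λ_k↓(C)`: the `k`-th largest eigenvalue (1-based) of the Hermitian matrix `C`. -/
noncomputable def kthLargestEig {ι : Type*} [Fintype ι] [DecidableEq ι]
    (C : Matrix ι ι ℂ) (k : ℕ) : ℝ :=
  if h : C.IsHermitian then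
    ((Finset.univ.val.map h.eigenvalues).sort (· ≤ ·)).getD (Fintype.card ι - k) 0
  else 0

/-- The index set for `M̃`: indices whose symplectic eigenvalue equals `d_m(A)`. -/
abbrev tilIdx {n : ℕ} (A : Mat n) (m : ℕ) := {k : Fin n // symplEig A k = sEig A m}

/-- The index set for `M̄`: indices whose symplectic eigenvalue is `< d_m(A)`. -/
abbrev barIdx {n : ℕ} (A : Mat n) (m : ℕ) := {k : Fin n // symplEig A k < sEig A m}

/-- `M̃`: the submatrix of `M` consisting of the column pairs `(u_k, v_k)` with
`d_k(A) = d_m(A)`. -/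
noncomputable def Mtil {n : ℕ} (A : Mat n) (m : ℕ) (M : Mat n) :
    Matrix (Fin n ⊕ Fin n) (tilIdx A m ⊕ tilIdx A m) ℝ :=
  M.submatrix id (Sum.map Subtype.val Subtype.val)

/-- `M̄`: the submatrix of `M` consisting of the column pairs `(u_k, v_k)` with
`d_k(A) < d_m(A)`. -/
noncomputable def Mbar {n : ℕ} (A : Mat n) (m : ℕ) (M : Mat n) :
    Matrix (Fin n ⊕ Fin n) (barIdx A m ⊕ barIdx A m) ℝ :=
  M.submatrix id (Sum.map Subtype.val Subtype.val)

/-- `B̄ = -M̄ᵀ B M̄`. -/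
noncomputable def Bbar {n : ℕ} (A : Mat n) (m : ℕ) (M B : Mat n) :
    Matrix (barIdx A m ⊕ barIdx A m) (barIdx A m ⊕ barIdx A m) ℝ :=
  -((Mbar A m M)ᵀ * B * Mbar A m M)

/-- `B̃ = -M̃ᵀ B M̃`. -/
noncomputable def Btil {n : ℕ} (A : Mat n) (m : ℕ) (M B : Mat n) :
    Matrix (tilIdx A m ⊕ tilIdx A m) (tilIdx A m ⊕ tilIdx A m) ℝ :=
  -((Mtil A m M)ᵀ * B * Mtil A m M)

/-- `B̃̃ = B̃₁₁ + B̃₂₂ + i (B̃₁₂ - B̃₁₂ᵀ)`, a Hermitian matrix. -/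
noncomputable def Btiltil {n : ℕ} (A : Mat n) (m : ℕ) (M B : Mat n) :
    Matrix (tilIdx A m) (tilIdx A m) ℂ :=
  fun p q =>
    ((Btil A m M B (Sum.inl p) (Sum.inl q) + Btil A m M B (Sum.inr p) (Sum.inr q) : ℝ) : ℂ) +
      Complex.I *
        ((Btil A m M B (Sum.inl p) (Sum.inr q) - Btil A m M B (Sum.inl q) (Sum.inr p) : ℝ) : ℂ)

/-- The directional derivative `d_m′(A; B)` of the `m`-th symplectic eigenvalue (1-based `m`). -/
noncomputable def dDeriv {n : ℕ} (A B : Mat n) (m : ℕ) : ℝ :=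
  limUnder (𝓝[>] (0 : ℝ)) (fun t => (sEig (A + t • B) m - sEig A m) / t)

/-- `m̂`: the smallest 1-based index `j` with `d_j(A) = d_m(A)`. -/
noncomputable def mhat {n : ℕ} (A : Mat n) (m : ℕ) : ℕ :=
  sInf {j : ℕ | 1 ≤ j ∧ sEig A j = sEig A m}

/-- The Clarke directional derivative `f°(A; B)` of `f` at `A` in direction `B`, where the
base point varies in the space of symmetric matrices. -/
noncomputable def clarkeD {n : ℕ} (f : Mat n → ℝ) (A B : Mat n) : ℝ :=
  Filter.limsup (fun p : Mat n × ℝ => (f (p.1 + p.2 • B) - f p.1) / p.2)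
    ((𝓝[{X : Mat n | X.IsSymm}] A) ×ˢ (𝓝[>] (0 : ℝ)))

/-- The Clarke subdifferential `∂° f(A)`. -/
noncomputable def clarkeSub {n : ℕ} (f : Mat n → ℝ) (A : Mat n) : Set (Mat n) :=
  {X | X.IsSymm ∧ ∀ H : Mat n, H.IsSymm → minner X H ≤ clarkeD f A H}

/-- The Michel-Penot directional derivative `f◇(A; B)`. -/
noncomputable def mpD {n : ℕ} (f : Mat n → ℝ) (A B : Mat n) : ℝ :=
  ⨆ X : {X : Mat n // X.IsSymm},
    Filter.limsup (fun t : ℝ => (f (A + t • X.1 + t • B) - f (A + t • X.1)) / t) (𝓝[>] (0 : ℝ))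

/-- The Michel-Penot subdifferential `∂◇ f(A)`. -/
noncomputable def mpSub {n : ℕ} (f : Mat n → ℝ) (A : Mat n) : Set (Mat n) :=
  {X | X.IsSymm ∧ ∀ H : Mat n, H.IsSymm → minner X H ≤ mpD f A H}

/-- `S_m(A)`: the set of normalised symplectic eigenvector pairs of `A` corresponding to the
symplectic eigenvalue `d_m(A)`. -/
noncomputable def SmSet {n : ℕ} (A : Mat n) (m : ℕ) :
    Set ((Fin n ⊕ Fin n → ℝ) × (Fin n ⊕ Fin n → ℝ)) :=
  {p | A *ᵥ p.1 = sEig A m • (symplJ n *ᵥ p.2) ∧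
       A *ᵥ p.2 = (-sEig A m) • (symplJ n *ᵥ p.1) ∧
       p.1 ⬝ᵥ (symplJ n *ᵥ p.2) = 1}

/-- The set `{ -(1/2)(xxᵀ + yyᵀ) : (x,y) ∈ S_m(A) }`. -/
noncomputable def gradSet {n : ℕ} (A : Mat n) (m : ℕ) : Set (Mat n) :=
  {X | ∃ p ∈ SmSet A m,
    X = (-(1 / 2) : ℝ) • (Matrix.vecMulVec p.1 p.1 + Matrix.vecMulVec p.2 p.2)}

/-- A symplectic eigenvector pair of `A` corresponding to some symplectic eigenvalue `d`. -/
noncomputable def EigPair {n : ℕ} (A : Mat n) (u v : Fin n ⊕ Fin n → ℝ) : Prop :=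
  (u ≠ 0 ∨ v ≠ 0) ∧ ∃ d : ℝ, (∃ i : Fin n, symplEig A i = d) ∧
    A *ᵥ u = d • (symplJ n *ᵥ v) ∧ A *ᵥ v = (-d) • (symplJ n *ᵥ u)

/-- The helper extending a finite matrix to a function on `ℕ × ℕ` (by zero). -/
def padFun {r i : ℕ} (U : Matrix (Fin r) (Fin i) ℝ) : ℕ → ℕ → ℝ :=
  fun a b => if h : a < r ∧ b < i then U ⟨a, h.1⟩ ⟨b, h.2⟩ else 0

/-- The set `Δ_m(A)` of structured `2n × 2m` matrices. -/
noncomputable def DeltaSet {n : ℕ} (A : Mat n) (m : ℕ) : Set (MatR n m) :=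
  {H | ∃ (U V : Matrix (Fin (iIdx A m + jIdx A m)) (Fin (iIdx A m)) ℝ),
    ((U.map (Complex.ofReal)) + Complex.I • (V.map (Complex.ofReal)))ᴴ *
      ((U.map (Complex.ofReal)) + Complex.I • (V.map (Complex.ofReal))) = 1 ∧
    ∀ (k : Fin n) (c : Fin m),
      (H (Sum.inl k) (Sum.inl c) =
        if (k : ℕ) < m - iIdx A m ∧ (c : ℕ) < m - iIdx A m then
          (if (k : ℕ) = (c : ℕ) then 1 else 0)
        else if (m - iIdx A m ≤ (k : ℕ) ∧ (k : ℕ) < m + jIdx A m) ∧ m - iIdx A m ≤ (c : ℕ) then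
          padFun U ((k : ℕ) - (m - iIdx A m)) ((c : ℕ) - (m - iIdx A m))
        else 0) ∧
      (H (Sum.inl k) (Sum.inr c) =
        if (m - iIdx A m ≤ (k : ℕ) ∧ (k : ℕ) < m + jIdx A m) ∧ m - iIdx A m ≤ (c : ℕ) then
          padFun V ((k : ℕ) - (m - iIdx A m)) ((c : ℕ) - (m - iIdx A m))
        else 0) ∧
      (H (Sum.inr k) (Sum.inl c) =
        if (m - iIdx A m ≤ (k : ℕ) ∧ (k : ℕ) < m + jIdx A m) ∧ m - iIdx A m ≤ (c : ℕ) then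
          -padFun V ((k : ℕ) - (m - iIdx A m)) ((c : ℕ) - (m - iIdx A m))
        else 0) ∧
      (H (Sum.inr k) (Sum.inr c) =
        if (k : ℕ) < m - iIdx A m ∧ (c : ℕ) < m - iIdx A m then
          (if (k : ℕ) = (c : ℕ) then 1 else 0)
        else if (m - iIdx A m ≤ (k : ℕ) ∧ (k : ℕ) < m + jIdx A m) ∧ m - iIdx A m ≤ (c : ℕ) then
          padFun U ((k : ℕ) - (m - iIdx A m)) ((c : ℕ) - (m - iIdx A m))
        else 0)}

/-- The operator norm (with respect to the Euclidean norm) of a `2n × 2n` real matrix. -/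
noncomputable def opN {n : ℕ} (A : Mat n) : ℝ :=
  ‖Matrix.toEuclideanCLM (𝕜 := ℝ) A‖

/-!
The quadratic form of a positive definite `A` dominates `‖A⁻¹‖⁻¹ ‖x‖²`: write
`x = T (T (A x))` with `T = √(A⁻¹)`, so that `‖x‖ ≤ ‖T‖ ‖T A x‖`, `‖T‖² = ‖A⁻¹‖` and
`‖T A x‖² = ⟨x, A x⟩`. The eigenvector equations and `⟨u, Jv⟩ = 1` give
`⟨u, Au⟩ = ⟨v, Av⟩ = d`, hence `‖u‖² + ‖v‖² ≤ 2 d ‖A⁻¹‖`. Finally `J` is orthogonal, so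
`‖Au‖² + ‖Av‖² = d² (‖u‖² + ‖v‖²) ≤ ‖A‖² (‖u‖² + ‖v‖²)`, i.e. `d ≤ ‖A‖`.
-/

open scoped Matrix.Norms.L2Operator MatrixOrder

section SumSq

variable {ι : Type*} [Fintype ι]

lemma sum_sq_eq_dotProduct_self (x : ι → ℝ) : ∑ i, x i ^ 2 = x ⬝ᵥ x := by
  simp only [dotProduct, sq]

lemma sum_sq_smul (c : ℝ) (x : ι → ℝ) : ∑ i, (c • x) i ^ 2 = c ^ 2 * ∑ i, x i ^ 2 := by
  simp only [Pi.smul_apply, smul_eq_mul, mul_pow, Finset.mul_sum]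

end SumSq

namespace Matrix

variable {ι : Type*} [Fintype ι]

lemma mulVec_dotProduct_mulVec (A : Matrix ι ι ℝ) (x y : ι → ℝ) :
    (A *ᵥ x) ⬝ᵥ (A *ᵥ y) = x ⬝ᵥ (Aᵀ * A) *ᵥ y := by
  rw [← mulVec_mulVec, dotProduct_mulVec x, vecMul_transpose]

variable [DecidableEq ι]

lemma sum_sq_mulVec_of_transpose_mul_self {Q : Matrix ι ι ℝ} (hQ : Qᵀ * Q = 1) (x : ι → ℝ) :
    ∑ i, (Q *ᵥ x) i ^ 2 = ∑ i, x i ^ 2 := by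
  rw [sum_sq_eq_dotProduct_self, sum_sq_eq_dotProduct_self, mulVec_dotProduct_mulVec, hQ,
    one_mulVec]

lemma sum_sq_mulVec_le (A : Matrix ι ι ℝ) (x : ι → ℝ) :
    ∑ i, (A *ᵥ x) i ^ 2 ≤ ‖A‖ ^ 2 * ∑ i, x i ^ 2 := by
  have h : ‖WithLp.toLp 2 (A *ᵥ x)‖ ≤ ‖A‖ * ‖WithLp.toLp 2 x‖ :=
    A.l2_opNorm_mulVec (WithLp.toLp 2 x)
  rw [← EuclideanSpace.real_norm_sq_eq (WithLp.toLp 2 x),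
    ← EuclideanSpace.real_norm_sq_eq (WithLp.toLp 2 (A *ᵥ x)), ← mul_pow]
  exact pow_le_pow_left₀ (norm_nonneg _) h 2

lemma PosDef.sum_sq_le_norm_inv_mul_dotProduct {A : Matrix ι ι ℝ} (hA : A.PosDef) (x : ι → ℝ) :
    ∑ i, x i ^ 2 ≤ ‖A⁻¹‖ * (x ⬝ᵥ A *ᵥ x) := by
  set T := CFC.sqrt A⁻¹
  have hT_sq : T * T = A⁻¹ := CFC.sqrt_mul_sqrt_self _ hA.inv.posSemidef.nonneg
  have hT_norm : ‖T‖ ^ 2 = ‖A⁻¹‖ := by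
    rw [CFC.norm_sqrt _ hA.inv.posSemidef.nonneg, Real.sq_sqrt (norm_nonneg _)]
  have hT_symm : Tᵀ = T := isHermitian_iff_isSymm.mp (CFC.sqrt_nonneg _).posSemidef.1
  have hA_inv_mul : A⁻¹ * A = 1 := nonsing_inv_mul _ ((isUnit_iff_isUnit_det A).mp hA.isUnit)
  have hTAx : ∑ i, (T *ᵥ (A *ᵥ x)) i ^ 2 = x ⬝ᵥ A *ᵥ x := by
    rw [sum_sq_eq_dotProduct_self, mulVec_dotProduct_mulVec, hT_symm, hT_sq, mulVec_mulVec,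
      hA_inv_mul, one_mulVec, dotProduct_comm]
  calc ∑ i, x i ^ 2 = ∑ i, (T *ᵥ (T *ᵥ (A *ᵥ x))) i ^ 2 := by
        rw [mulVec_mulVec, mulVec_mulVec, hT_sq, hA_inv_mul, one_mulVec]
    _ ≤ ‖A⁻¹‖ * (x ⬝ᵥ A *ᵥ x) := by
      rw [← hT_norm, ← hTAx]; exact sum_sq_mulVec_le T _

end Matrix

section Symplectic

variable {n : ℕ}

lemma symplJ_transpose : (symplJ n)ᵀ = -symplJ n := by
  rw [symplJ, fromBlocks_transpose, fromBlocks_neg]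
  simp

lemma symplJ_transpose_mul_self : (symplJ n)ᵀ * symplJ n = 1 := by
  rw [symplJ_transpose, symplJ, fromBlocks_neg, fromBlocks_multiply, ← fromBlocks_one]
  simp

lemma sum_sq_symplJ_mulVec (x : Fin n ⊕ Fin n → ℝ) :
    ∑ i, (symplJ n *ᵥ x) i ^ 2 = ∑ i, x i ^ 2 :=
  sum_sq_mulVec_of_transpose_mul_self symplJ_transpose_mul_self x

lemma dotProduct_symplJ_mulVec_swap (u v : Fin n ⊕ Fin n → ℝ) :
    v ⬝ᵥ (symplJ n *ᵥ u) = -(u ⬝ᵥ (symplJ n *ᵥ v)) := by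
  rw [dotProduct_mulVec, ← mulVec_transpose, symplJ_transpose, neg_mulVec, neg_dotProduct,
    dotProduct_comm]

variable {A : Mat n} {u v : Fin n ⊕ Fin n → ℝ} {d : ℝ}

lemma dotProduct_mulVec_eq_of_symplectic_pair (h1 : A *ᵥ u = d • (symplJ n *ᵥ v))
    (h2 : A *ᵥ v = (-d) • (symplJ n *ᵥ u)) (h3 : u ⬝ᵥ (symplJ n *ᵥ v) = 1) :
    u ⬝ᵥ A *ᵥ u = d ∧ v ⬝ᵥ A *ᵥ v = d := by
  refine ⟨?_, ?_⟩
  · rw [h1, dotProduct_smul, h3, smul_eq_mul, mul_one]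
  · rw [h2, dotProduct_smul, dotProduct_symplJ_mulVec_swap, h3, smul_eq_mul, mul_neg, mul_one,
      neg_neg]

lemma abs_le_norm_of_symplectic_pair (h1 : A *ᵥ u = d • (symplJ n *ᵥ v))
    (h2 : A *ᵥ v = (-d) • (symplJ n *ᵥ u)) (hu : u ≠ 0) : |d| ≤ ‖A‖ := by
  set N := ∑ i, u i ^ 2 + ∑ i, v i ^ 2
  have hN : 0 < N := by
    obtain ⟨i, hi⟩ := Function.ne_iff.mp hu
    have hu_pos : 0 < ∑ i, u i ^ 2 :=
      Finset.sum_pos' (fun j _ => sq_nonneg (u j))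
        ⟨i, Finset.mem_univ i, pow_two_pos_of_ne_zero hi⟩
    positivity
  have hAuv : ∑ i, (A *ᵥ u) i ^ 2 + ∑ i, (A *ᵥ v) i ^ 2 = d ^ 2 * N := by
    rw [h1, h2, sum_sq_smul, sum_sq_smul, sum_sq_symplJ_mulVec, sum_sq_symplJ_mulVec,
      neg_sq]
    ring
  have hle : d ^ 2 * N ≤ ‖A‖ ^ 2 * N := by
    rw [← hAuv, mul_add]
    exact add_le_add (sum_sq_mulVec_le A u) (sum_sq_mulVec_le A v)
  exact abs_le_of_sq_le_sq (le_of_mul_le_mul_right hle hN) (norm_nonneg A)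

end Symplectic

lemma opN_eq_norm {n : ℕ} (A : Mat n) : opN A = ‖A‖ := rfl

theorem stmt17_general {n : ℕ} (A : Mat n) (hA : A.PosDef) (u v : Fin n ⊕ Fin n → ℝ)
    (d : ℝ)
    (h1 : A *ᵥ u = d • (symplJ n *ᵥ v)) (h2 : A *ᵥ v = (-d) • (symplJ n *ᵥ u))
    (h3 : u ⬝ᵥ (symplJ n *ᵥ v) = 1) :
    (∑ i, (u i) ^ 2) + (∑ i, (v i) ^ 2) ≤ 2 * (opN A * opN A⁻¹) := by
  have hu : u ≠ 0 := by
    rintro rfl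
    simp at h3
  obtain ⟨hAu, hAv⟩ := dotProduct_mulVec_eq_of_symplectic_pair h1 h2 h3
  have hd : d ≤ ‖A‖ := (le_abs_self d).trans (abs_le_norm_of_symplectic_pair h1 h2 hu)
  rw [opN_eq_norm, opN_eq_norm]
  calc ∑ i, u i ^ 2 + ∑ i, v i ^ 2 ≤ ‖A⁻¹‖ * (u ⬝ᵥ A *ᵥ u) + ‖A⁻¹‖ * (v ⬝ᵥ A *ᵥ v) :=
        add_le_add (hA.sum_sq_le_norm_inv_mul_dotProduct u)
          (hA.sum_sq_le_norm_inv_mul_dotProduct v)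
    _ = 2 * (d * ‖A⁻¹‖) := by rw [hAu, hAv]; ring
    _ ≤ 2 * (‖A‖ * ‖A⁻¹‖) := by gcongr

theorem stmt17 {n : ℕ} (A : Mat n) (hA : A.PosDef) (u v : Fin n ⊕ Fin n → ℝ)
    (d : ℝ) (hd : 0 < d)
    (h1 : A *ᵥ u = d • (symplJ n *ᵥ v)) (h2 : A *ᵥ v = (-d) • (symplJ n *ᵥ u))
    (h3 : u ⬝ᵥ (symplJ n *ᵥ v) = 1) :
    (∑ i, (u i) ^ 2) + (∑ i, (v i) ^ 2) ≤ 2 * (opN A * opN A⁻¹) :=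
  stmt17_general A hA u v d h1 h2 h3
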